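/- For every k ∈ ℕ with k ≥ 1, every real x > 0, and every h ∈ ℂ with Re(h) > 1, the defining series of ζ_q(s, x | h) converge at s = 1 − k and ζ_q(1−k, x | h) = − β_{k,q}^h(x) / k. -/

import Mathlib

/-!
At `s = 1 - k` the powers `[n+x]_q^{-s}` and `[n+x]_q^{1-s}` are the polynomials
`[n+x]_q^{k-1}` and `[n+x]_q^k` in `q^{n+x}`. Expanding them binomially turns both defining series
into finite combinations of geometric series in `q^{h+l}` and `q^{h-1+l}`, which converge since
`Re h > 1` and sum in closed form. In `β_{k,q}^h(x)` the weight `l + h - 1` splits into `h - 1`,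
which reproduces the second series, and `l`, which via `l·C(k,l) = k·C(k-1,l-1)` shifts the index
and reproduces the first.
-/

open Complex Finset Filter

/-- Complex power `q^z := exp(z·log q)` for a real base `q`. -/
noncomputable def qcpow (q : ℝ) (z : ℂ) : ℂ := Complex.exp (z * (Real.log q : ℂ))

/-- The complex `q`-number `[z]_q = (1 - q^z)/(1 - q)`. -/
noncomputable def qnum (q : ℝ) (z : ℂ) : ℂ := (1 - qcpow q z) / (1 - (q : ℂ))

/-- The real `q`-number `[y]_q = (1 - q^y)/(1 - q)` for real `y`. -/
noncomputable def qnumR (q : ℝ) (y : ℝ) : ℝ := (1 - Real.exp (y * Real.log q)) / (1 - q)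

/-- The `(h,q)`-Bernoulli polynomial
`β_{n,q}^h(x) = (1-q)^{-n} ∑_{l=0}^{n} C(n,l) (-1)^l q^{lx} (l+h-1)/[l+h-1]_q`. -/
noncomputable def qbeta (q : ℝ) (h : ℂ) (n : ℕ) (x : ℝ) : ℂ :=
  (1 - (q : ℂ))⁻¹ ^ n * ∑ l ∈ Finset.range (n + 1),
    (n.choose l : ℂ) * (-1) ^ l * qcpow q ((l : ℂ) * (x : ℂ)) *
      (((l : ℂ) + h - 1) / qnum q ((l : ℂ) + h - 1))

/-- The Hurwitz-type `(h,q)`-zeta function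
`ζ_q(s, x | h) = ∑ q^{hn+x}/[n+x]_q^s + ((h-1)(1-q)/(s-1)) ∑ q^{(h-1)n}/[n+x]_q^{s-1}`,
where `[n+x]_q^s = exp(s·log [n+x]_q)`. -/
noncomputable def hqZetaH (q : ℝ) (h s : ℂ) (x : ℝ) : ℂ :=
  (∑' n : ℕ, qcpow q (h * (n : ℂ) + (x : ℂ)) /
      Complex.exp (s * (Real.log (qnumR q ((n : ℝ) + x)) : ℂ))) +
  ((h - 1) * (1 - (q : ℂ)) / (s - 1)) *
    ∑' n : ℕ, qcpow q ((h - 1) * (n : ℂ)) /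
      Complex.exp ((s - 1) * (Real.log (qnumR q ((n : ℝ) + x)) : ℂ))

/-- The `(h,q)`-zeta function
`ζ_q(s | h) = ∑_{n≥1} q^{hn}/[n]_q^s + ((h-1)(1-q)/(s-1)) ∑_{n≥1} q^{(h-1)n}/[n]_q^{s-1}`. -/
noncomputable def hqZeta (q : ℝ) (h s : ℂ) : ℂ :=
  (∑' n : ℕ, qcpow q (h * ((n : ℂ) + 1)) /
      Complex.exp (s * (Real.log (qnumR q ((n : ℝ) + 1)) : ℂ))) +
  ((h - 1) * (1 - (q : ℂ)) / (s - 1)) *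
    ∑' n : ℕ, qcpow q ((h - 1) * ((n : ℂ) + 1)) /
      Complex.exp ((s - 1) * (Real.log (qnumR q ((n : ℝ) + 1)) : ℂ))

lemma qcpow_add (q : ℝ) (a b : ℂ) : qcpow q (a + b) = qcpow q a * qcpow q b := by
  simp only [qcpow, add_mul, Complex.exp_add]

lemma qcpow_mul_natCast (q : ℝ) (z : ℂ) (n : ℕ) : qcpow q (z * n) = qcpow q z ^ n := by
  rw [qcpow, qcpow, mul_comm z, mul_assoc, Complex.exp_nat_mul]

lemma norm_qcpow_lt_one {q : ℝ} (hq0 : 0 < q) (hq1 : q < 1) {z : ℂ} (hz : 0 < z.re) :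
    ‖qcpow q z‖ < 1 := by
  rw [qcpow, Complex.norm_exp, Real.exp_lt_one_iff, Complex.re_mul_ofReal]
  exact mul_neg_of_pos_of_neg hz (Real.log_neg hq0 hq1)

lemma qnumR_pos {q : ℝ} (hq0 : 0 < q) (hq1 : q < 1) {y : ℝ} (hy : 0 < y) : 0 < qnumR q y := by
  have : Real.exp (y * Real.log q) < 1 :=
    Real.exp_lt_one_iff.mpr (mul_neg_of_pos_of_neg hy (Real.log_neg hq0 hq1))
  exact div_pos (by linarith) (by linarith)

lemma ofReal_qnumR_pow (q y : ℝ) (m : ℕ) :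
    ((qnumR q y : ℝ) : ℂ) ^ m =
      (1 - (q : ℂ))⁻¹ ^ m * ∑ l ∈ range (m + 1), (m.choose l : ℂ) * (-1) ^ l * qcpow q (l * y) := by
  have hcast : ((qnumR q y : ℝ) : ℂ) = (1 - qcpow q y) * (1 - (q : ℂ))⁻¹ := by
    simp [qnumR, qcpow, div_eq_mul_inv, Complex.ofReal_exp]
  rw [hcast, mul_pow, mul_comm, sub_eq_neg_add 1 (qcpow q y), add_pow]
  congr 1
  refine Finset.sum_congr rfl fun l _ => ?_
  rw [neg_pow, mul_comm (l : ℂ), qcpow_mul_natCast]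
  ring

lemma cexp_neg_natCast_mul_log {r : ℝ} (hr : 0 < r) (m : ℕ) :
    Complex.exp (-(m : ℂ) * (Real.log r : ℂ)) = ((r : ℂ) ^ m)⁻¹ := by
  rw [neg_mul, Complex.exp_neg, Complex.exp_nat_mul, ← Complex.ofReal_exp, Real.exp_log hr]

lemma sum_range_choose_mul_natCast_mul {R : Type*} [CommSemiring R] (n : ℕ) (f : ℕ → R) :
    ∑ l ∈ range (n + 1 + 1), ((n + 1).choose l : R) * l * f l =
      (n + 1) * ∑ l ∈ range (n + 1), (n.choose l : R) * f (l + 1) := by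
  rw [sum_range_succ', mul_sum, Nat.cast_zero, mul_zero, zero_mul, add_zero]
  refine Finset.sum_congr rfl fun l _ => ?_
  have := congrArg (Nat.cast : ℕ → R) (Nat.add_one_mul_choose_eq n l)
  push_cast at this
  rw [← mul_assoc, this, Nat.cast_succ]

/-- The closed form of `(1-q)^m ∑_n q^{cn} [n+x]_q^m`. -/
noncomputable def binomGeomSum (q : ℝ) (c : ℂ) (x : ℝ) (m : ℕ) : ℂ :=
  ∑ l ∈ range (m + 1), (m.choose l : ℂ) * (-1) ^ l * qcpow q (l * x) * (1 - qcpow q (c + l))⁻¹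

lemma hasSum_qcpow_mul_qnumR_pow {q : ℝ} (hq0 : 0 < q) (hq1 : q < 1) {c : ℂ} (hc : 0 < c.re)
    (x : ℝ) (m : ℕ) :
    HasSum (fun n : ℕ => qcpow q (c * n) * ((qnumR q (n + x) : ℝ) : ℂ) ^ m)
      ((1 - (q : ℂ))⁻¹ ^ m * binomGeomSum q c x m) := by
  set a : ℕ → ℂ := fun l => (1 - (q : ℂ))⁻¹ ^ m * (m.choose l : ℂ) * (-1) ^ l * qcpow q (l * x)
  have hgeom (l : ℕ) : HasSum (fun n : ℕ => qcpow q ((c + l) * n)) (1 - qcpow q (c + l))⁻¹ := by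
    simp only [qcpow_mul_natCast]
    exact hasSum_geometric_of_norm_lt_one (norm_qcpow_lt_one hq0 hq1 (by simp only [add_re, natCast_re]; positivity))
  have hterm (n : ℕ) : qcpow q (c * n) * ((qnumR q (n + x) : ℝ) : ℂ) ^ m =
      ∑ l ∈ range (m + 1), a l * qcpow q ((c + l) * n) := by
    rw [ofReal_qnumR_pow, mul_left_comm, mul_sum, mul_sum]
    refine Finset.sum_congr rfl fun l _ => ?_
    have : qcpow q (c * n) * qcpow q (l * ((n + x : ℝ) : ℂ)) =
        qcpow q (l * x) * qcpow q ((c + l) * n) := by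
      rw [← qcpow_add, ← qcpow_add]
      congr 1
      push_cast
      ring
    linear_combination ((1 - (q : ℂ))⁻¹ ^ m * (m.choose l : ℂ) * (-1) ^ l) * this
  have hvalue : (1 - (q : ℂ))⁻¹ ^ m * binomGeomSum q c x m =
      ∑ l ∈ range (m + 1), a l * (1 - qcpow q (c + l))⁻¹ := by
    rw [binomGeomSum, mul_sum]
    exact Finset.sum_congr rfl fun l _ => by ring
  rw [hvalue]
  exact (hasSum_sum fun l _ => (hgeom l).mul_left (a l)).congr_fun hterm

lemma qbeta_succ (q : ℝ) (h : ℂ) (j : ℕ) (x : ℝ) :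
    qbeta q h (j + 1) x = (1 - (q : ℂ))⁻¹ ^ (j + 1) * ((1 - q) *
      ((h - 1) * binomGeomSum q (h - 1) x (j + 1) - (j + 1) * qcpow q x * binomGeomSum q h x j)) := by
  set f : ℕ → ℂ := fun l => (-1) ^ l * qcpow q (l * x) * (1 - qcpow q (h - 1 + l))⁻¹ with hf
  have hsplit : qbeta q h (j + 1) x = (1 - (q : ℂ))⁻¹ ^ (j + 1) * ((1 - q) *
      ((h - 1) * binomGeomSum q (h - 1) x (j + 1) +
        ∑ l ∈ range (j + 1 + 1), ((j + 1).choose l : ℂ) * l * f l)) := by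
    rw [qbeta]
    congr 1
    rw [binomGeomSum, mul_sum, ← sum_add_distrib, mul_sum]
    refine Finset.sum_congr rfl fun l _ => ?_
    rw [qnum, div_div_eq_mul_div, hf, show (l : ℂ) + h - 1 = h - 1 + l by ring]
    ring
  have hshift : ∑ l ∈ range (j + 1), (j.choose l : ℂ) * f (l + 1) =
      -qcpow q x * binomGeomSum q h x j := by
    rw [binomGeomSum, mul_sum]
    refine Finset.sum_congr rfl fun l _ => ?_
    rw [hf]
    push_cast
    rw [show h - 1 + (l + 1) = h + l by ring, add_mul, one_mul, qcpow_add]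
    ring
  rw [hsplit, sum_range_choose_mul_natCast_mul, hshift]
  ring

/-- `ζ_q(1-k, x | h) = -β_{k,q}^h(x)/k` for `k ≥ 1`, with the defining
series converging at `s = 1-k`. -/
theorem hqZetaH_neg_nat (q : ℝ) (hq0 : 0 < q) (hq1 : q < 1)
    (h : ℂ) (hh : 1 < h.re) (k : ℕ) (hk : 1 ≤ k) (x : ℝ) (hx : 0 < x) :
    Summable (fun n : ℕ => qcpow q (h * (n : ℂ) + (x : ℂ)) /
      Complex.exp ((1 - (k : ℂ)) * (Real.log (qnumR q ((n : ℝ) + x)) : ℂ))) ∧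
    Summable (fun n : ℕ => qcpow q ((h - 1) * (n : ℂ)) /
      Complex.exp (((1 - (k : ℂ)) - 1) * (Real.log (qnumR q ((n : ℝ) + x)) : ℂ))) ∧
    hqZetaH q h (1 - (k : ℂ)) x = -qbeta q h k x / (k : ℂ) := by
  obtain ⟨j, rfl⟩ : ∃ j, k = j + 1 := ⟨k - 1, by omega⟩
  have hexp1 : 1 - ((j + 1 : ℕ) : ℂ) = -(j : ℂ) := by push_cast; ring
  have hexp2 : 1 - ((j + 1 : ℕ) : ℂ) - 1 = -((j + 1 : ℕ) : ℂ) := by push_cast; ring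
  have hpow (m : ℕ) (A : ℂ) (n : ℕ) :
      A / Complex.exp (-(m : ℂ) * (Real.log (qnumR q (n + x)) : ℂ)) =
        A * ((qnumR q (n + x) : ℝ) : ℂ) ^ m := by
    rw [cexp_neg_natCast_mul_log (qnumR_pos hq0 hq1 (by positivity)), div_inv_eq_mul]
  have H1 := ((hasSum_qcpow_mul_qnumR_pow hq0 hq1 (by linarith) x j).mul_left (qcpow q x)).congr_fun
    fun n : ℕ => show qcpow q (h * n + x) /
        Complex.exp ((1 - ((j + 1 : ℕ) : ℂ)) * (Real.log (qnumR q (n + x)) : ℂ)) = _ by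
      rw [hexp1, hpow, qcpow_add]
      ring
  have H2 := (hasSum_qcpow_mul_qnumR_pow hq0 hq1 (c := h - 1) (by simp only [sub_re, one_re]; linarith) x (j + 1)).congr_fun
    fun n : ℕ => show qcpow q ((h - 1) * n) /
        Complex.exp ((1 - ((j + 1 : ℕ) : ℂ) - 1) * (Real.log (qnumR q (n + x)) : ℂ)) = _ by
      rw [hexp2, hpow]
  refine ⟨H1.summable, H2.summable, ?_⟩
  have hq : (1 - (q : ℂ)) ≠ 0 := sub_ne_zero.mpr (by exact_mod_cast hq1.ne')
  have hj : (j : ℂ) + 1 ≠ 0 := Nat.cast_add_one_ne_zero j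
  rw [hqZetaH, H1.tsum_eq, H2.tsum_eq, hexp2, qbeta_succ]
  push_cast
  rw [inv_pow, inv_pow]
  field_simp
  ring
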